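/- For x > 0, the function ψ(x) := 4π x^{−3} Σ_{n≥1} n² e^{−πn²/x²} is nondecreasing on (0,∞), tends to 0 as x → 0⁺, and tends to 1 as x → ∞. -/

import Mathlib

open Real Filter

noncomputable def psi (x : ℝ) : ℝ :=
  4 * π * x ^ (-3 : ℤ) * ∑' n : ℕ+, (n : ℝ) ^ 2 * Real.exp (-π * (n : ℝ) ^ 2 / x ^ 2)

open Set Topology

/-!
Write `ϑ(t) = ∑_{n ∈ ℤ} exp (-π n² t)`. Then `ψ` is the derivative of `x ↦ ϑ(1/x²)`, and Jacobi's
identity `ϑ(1/x²) = x ϑ(x²)` turns this into `ψ(x) = ∑_{n ∈ ℤ} (1 - 2πn²x²) exp (-πn²x²)`.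
With `c = πn² ≥ π`, the terms `u³ exp (-c u²)` (at `u = 1/x`) of the defining series are
decreasing in `u ≥ 1`, and the terms `(1 - 2cx²) exp (-cx²)` of the second series are increasing
in `x ≥ 1`, because `2c > 3`. So `ψ` is increasing on `(0, 1]` and on `[1, ∞)`. The same
termwise monotonicity bounds every term by its value at `1`, so both limits follow from
dominated convergence: the first series tends to `0` as `u → ∞`, and the second to `1` as `x → ∞`.
-/

lemma antitoneOn_pow_three_mul_exp_neg_mul_sq {a c : ℝ} (ha : 0 ≤ a) (hac : 3 ≤ 2 * c * a ^ 2) :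
    AntitoneOn (fun u => u ^ 3 * exp (-c * u ^ 2)) (Ici a) := by
  refine antitoneOn_of_hasDerivWithinAt_nonpos (convex_Ici a) (by fun_prop)
    (fun u _ => ((hasDerivAt_pow 3 u).mul
      (((hasDerivAt_pow 2 u).const_mul (-c)).exp)).hasDerivWithinAt) fun u hu => ?_
  rw [interior_Ici, mem_Ioi] at hu
  have hcu : 3 ≤ 2 * c * u ^ 2 := by
    nlinarith [pow_le_pow_left₀ ha hu.le 2, sq_nonneg a]
  have hderiv : ((3 : ℕ) : ℝ) * u ^ (3 - 1) * exp (-c * u ^ 2) +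
      u ^ 3 * (exp (-c * u ^ 2) * (-c * (((2 : ℕ) : ℝ) * u ^ (2 - 1)))) =
      -(u ^ 2 * exp (-c * u ^ 2) * (2 * c * u ^ 2 - 3)) := by
    push_cast; ring
  rw [hderiv, neg_nonpos]
  exact mul_nonneg (by positivity) (by linarith)

lemma monotoneOn_one_sub_two_mul_sq_mul_exp_neg_mul_sq {a c : ℝ} (ha : 0 ≤ a)
    (hac : 3 ≤ 2 * c * a ^ 2) :
    MonotoneOn (fun x => (1 - 2 * c * x ^ 2) * exp (-c * x ^ 2)) (Ici a) := by
  refine monotoneOn_of_hasDerivWithinAt_nonneg (convex_Ici a) (by fun_prop)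
    (fun x _ => ((((hasDerivAt_pow 2 x).const_mul (2 * c)).const_sub 1).mul
      (((hasDerivAt_pow 2 x).const_mul (-c)).exp)).hasDerivWithinAt) fun x hx => ?_
  rw [interior_Ici, mem_Ioi] at hx
  have hcx : 3 ≤ 2 * c * x ^ 2 := by
    nlinarith [pow_le_pow_left₀ ha hx.le 2, sq_nonneg a]
  have hc : 0 ≤ c := by nlinarith [sq_nonneg x]
  have hderiv : -(2 * c * (((2 : ℕ) : ℝ) * x ^ (2 - 1))) * exp (-c * x ^ 2) +
      (1 - 2 * c * x ^ 2) * (exp (-c * x ^ 2) * (-c * (((2 : ℕ) : ℝ) * x ^ (2 - 1)))) =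
      2 * c * x * exp (-c * x ^ 2) * (2 * c * x ^ 2 - 3) := by
    push_cast; ring
  rw [hderiv]
  exact mul_nonneg (by have := ha.trans_lt hx; positivity) (by linarith)

lemma tendsto_pow_three_mul_exp_neg_mul_sq_atTop {c : ℝ} (hc : 0 < c) :
    Tendsto (fun u => u ^ 3 * exp (-c * u ^ 2)) atTop (𝓝 0) := by
  refine ((tendsto_rpow_abs_mul_exp_neg_mul_sq_cocompact hc 3).mono_left atTop_le_cocompact).congr'
    ?_
  filter_upwards [eventually_ge_atTop 0] with u hu
  rw [abs_of_nonneg hu, ← rpow_natCast]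
  norm_num

lemma tendsto_one_sub_two_mul_sq_mul_exp_neg_mul_sq_atTop {c : ℝ} (hc : 0 < c) :
    Tendsto (fun x => (1 - 2 * c * x ^ 2) * exp (-c * x ^ 2)) atTop (𝓝 0) := by
  have h0 := tendsto_rpow_abs_mul_exp_neg_mul_sq_cocompact hc 0
  have h2 := tendsto_rpow_abs_mul_exp_neg_mul_sq_cocompact hc 2
  have := (h0.sub (h2.const_mul (2 * c))).mono_left atTop_le_cocompact
  simp only [mul_zero, sub_zero] at this
  refine this.congr fun x => ?_
  rw [rpow_zero, rpow_two, sq_abs]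
  ring

lemma summable_int_sq_pow_mul_exp_neg_mul_sq (k : ℕ) {c : ℝ} (hc : 0 < c) :
    Summable fun n : ℤ => ((n : ℝ) ^ 2) ^ k * exp (-c * n ^ 2) := by
  refine (summable_pow_mul_jacobiTheta₂_term_bound 0 (div_pos hc pi_pos) (2 * k)).congr
    fun n => ?_
  rw [Int.cast_abs, pow_mul, sq_abs]
  congr 2
  field_simp
  ring

lemma summable_pnat_sq_pow_mul_exp_neg_mul_sq (k : ℕ) {c : ℝ} (hc : 0 < c) :
    Summable fun n : ℕ+ => ((n : ℝ) ^ 2) ^ k * exp (-c * n ^ 2) := by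
  simpa [Function.comp_def] using (summable_int_sq_pow_mul_exp_neg_mul_sq k hc).comp_injective
    (Nat.cast_injective.comp PNat.coe_injective)

lemma three_le_two_mul_pi_mul_sq (n : ℕ+) : 3 ≤ 2 * (π * (n : ℝ) ^ 2) * 1 ^ 2 := by
  have hn : (1 : ℝ) ≤ (n : ℝ) ^ 2 := one_le_pow₀ (Nat.one_le_cast.2 n.pos)
  nlinarith [pi_gt_three]

noncomputable def jacobiThetaReal (t : ℝ) : ℝ := ∑' n : ℤ, exp (-π * n ^ 2 * t)

lemma hasDerivAt_jacobiThetaReal {t : ℝ} (ht : 0 < t) :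
    HasDerivAt jacobiThetaReal (∑' n : ℤ, -π * n ^ 2 * exp (-π * n ^ 2 * t)) t := by
  refine hasDerivAt_tsum_of_isPreconnected (g := fun (n : ℤ) s => exp (-π * n ^ 2 * s))
    (g' := fun n s => -π * n ^ 2 * exp (-π * n ^ 2 * s))
    ((summable_int_sq_pow_mul_exp_neg_mul_sq 1 (c := π * (t / 2)) (by positivity)).mul_left π)
    isOpen_Ioi isPreconnected_Ioi (fun n s _ => ?_) (fun n s hs => ?_) (half_lt_self ht) ?_
    (half_lt_self ht)
  · exact (((hasDerivAt_id' s).const_mul (-π * n ^ 2)).exp).congr_deriv (by ring)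
  · have hs : t / 2 ≤ s := le_of_lt hs
    rw [norm_mul, norm_mul, norm_neg, norm_of_nonneg pi_pos.le, norm_of_nonneg (sq_nonneg _),
      norm_of_nonneg (exp_pos _).le, pow_one, mul_assoc]
    refine mul_le_mul_of_nonneg_left (mul_le_mul_of_nonneg_left (exp_le_exp.2 ?_) (sq_nonneg _))
      pi_pos.le
    nlinarith [mul_le_mul_of_nonneg_left hs (mul_nonneg pi_pos.le (sq_nonneg (n : ℝ)))]
  · simpa [mul_right_comm] using summable_int_sq_pow_mul_exp_neg_mul_sq 0 (mul_pos pi_pos ht)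

lemma jacobiThetaReal_inv_sq {x : ℝ} (hx : 0 < x) :
    jacobiThetaReal (x ^ 2)⁻¹ = x * jacobiThetaReal (x ^ 2) := by
  have h := tsum_exp_neg_mul_int_sq (inv_pos.2 (pow_pos hx 2))
  have hroot : ((x ^ 2)⁻¹) ^ (1 / 2 : ℝ) = x⁻¹ := by
    rw [inv_rpow (by positivity), ← sqrt_eq_rpow, sqrt_sq hx.le]
  rw [hroot, one_div, inv_inv, div_inv_eq_mul] at h
  have e (a : ℝ) (n : ℤ) : -π * n ^ 2 * a = -π * a * n ^ 2 := by ring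
  simp only [jacobiThetaReal, e, h]

lemma hasDerivAt_jacobiThetaReal_inv_sq {x : ℝ} (hx : 0 < x) :
    HasDerivAt (fun y => jacobiThetaReal (y ^ 2)⁻¹) (psi x) x := by
  have hinv : HasDerivAt (fun y : ℝ => (y ^ 2)⁻¹) (-(2 * x) / (x ^ 2) ^ 2) x := by
    have hsq : HasDerivAt (fun y : ℝ => y ^ 2) (2 * x) x := by simpa using hasDerivAt_pow 2 x
    exact hsq.fun_inv (by positivity)
  refine ((hasDerivAt_jacobiThetaReal (by positivity)).comp x hinv).congr_deriv ?_
  have hterm (n : ℤ) : -π * (n : ℝ) ^ 2 * exp (-π * n ^ 2 * (x ^ 2)⁻¹) =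
      -π * ((n : ℝ) ^ 2 * exp (-π * n ^ 2 / x ^ 2)) := by
    rw [div_eq_mul_inv]; ring
  have heven : Function.Even fun n : ℤ => (n : ℝ) ^ 2 * exp (-π * n ^ 2 / x ^ 2) :=
    fun n => by simp
  have hsum : Summable fun n : ℤ => (n : ℝ) ^ 2 * exp (-π * n ^ 2 / x ^ 2) := by
    refine (summable_int_sq_pow_mul_exp_neg_mul_sq 1 (c := π / x ^ 2) (by positivity)).congr
      fun n => ?_
    rw [pow_one]; ring_nf
  simp only [hterm, tsum_mul_left, tsum_int_eq_zero_add_two_mul_tsum_pnat heven hsum, psi]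
  simp only [Int.cast_zero, Int.cast_natCast, zpow_neg, zpow_ofNat]
  field_simp
  ring

lemma hasDerivAt_mul_jacobiThetaReal_sq {x : ℝ} (hx : 0 < x) :
    HasDerivAt (fun y => y * jacobiThetaReal (y ^ 2))
      (∑' n : ℤ, (1 - 2 * π * n ^ 2 * x ^ 2) * exp (-π * n ^ 2 * x ^ 2)) x := by
  have hsq : HasDerivAt (fun y : ℝ => y ^ 2) (2 * x) x := by simpa using hasDerivAt_pow 2 x
  refine ((hasDerivAt_id' x).mul
    ((hasDerivAt_jacobiThetaReal (by positivity)).comp x hsq)).congr_deriv ?_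
  have h0 := summable_int_sq_pow_mul_exp_neg_mul_sq 0 (c := π * x ^ 2) (by positivity)
  have h1 := summable_int_sq_pow_mul_exp_neg_mul_sq 1 (c := π * x ^ 2) (by positivity)
  simp only [pow_zero, one_mul, pow_one] at h0 h1
  have hterm (n : ℤ) : -π * (n : ℝ) ^ 2 * exp (-(π * x ^ 2) * n ^ 2) =
      -π * ((n : ℝ) ^ 2 * exp (-(π * x ^ 2) * n ^ 2)) := by ring
  have hsplit (n : ℤ) : (1 - 2 * π * n ^ 2 * x ^ 2) * exp (-π * n ^ 2 * x ^ 2) =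
      exp (-(π * x ^ 2) * n ^ 2) - 2 * π * x ^ 2 * ((n : ℝ) ^ 2 * exp (-(π * x ^ 2) * n ^ 2)) := by
    ring_nf
  have hexp (n : ℤ) : exp (-π * n ^ 2 * x ^ 2) = exp (-(π * x ^ 2) * n ^ 2) := by ring_nf
  rw [tsum_congr hsplit, Summable.tsum_sub h0 (h1.mul_left _), tsum_mul_left]
  simp only [Function.comp_apply, jacobiThetaReal, hexp, hterm, tsum_mul_left]
  ring

lemma psi_eq_tsum_int {x : ℝ} (hx : 0 < x) :
    psi x = ∑' n : ℤ, (1 - 2 * π * n ^ 2 * x ^ 2) * exp (-π * n ^ 2 * x ^ 2) :=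
  (hasDerivAt_jacobiThetaReal_inv_sq hx).unique <|
    (hasDerivAt_mul_jacobiThetaReal_sq hx).congr_of_eventuallyEq <|
      (eventually_gt_nhds hx).mono fun _ hy => jacobiThetaReal_inv_sq hy

lemma psi_eq_one_add_two_mul_tsum {x : ℝ} (hx : 0 < x) :
    psi x = 1 + 2 * ∑' n : ℕ+, (1 - 2 * (π * n ^ 2) * x ^ 2) * exp (-(π * n ^ 2) * x ^ 2) := by
  have heven : Function.Even fun n : ℤ => (1 - 2 * π * n ^ 2 * x ^ 2) * exp (-π * n ^ 2 * x ^ 2) :=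
    fun n => by simp
  have hsum : Summable fun n : ℤ => (1 - 2 * π * n ^ 2 * x ^ 2) * exp (-π * n ^ 2 * x ^ 2) := by
    refine ((summable_int_sq_pow_mul_exp_neg_mul_sq 0 (c := π * x ^ 2) (by positivity)).sub
      ((summable_int_sq_pow_mul_exp_neg_mul_sq 1 (c := π * x ^ 2) (by positivity)).mul_left
        (2 * π * x ^ 2))).congr fun n => ?_
    ring_nf
  rw [psi_eq_tsum_int hx, tsum_int_eq_zero_add_two_mul_tsum_pnat heven hsum]
  congr 1
  · simp
  · rw [nsmul_eq_mul, Nat.cast_ofNat]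
    congr 1
    exact tsum_congr fun n => by push_cast; ring_nf

lemma summable_psi_term {x : ℝ} (hx : x ≠ 0) :
    Summable fun n : ℕ+ => (1 - 2 * (π * n ^ 2) * x ^ 2) * exp (-(π * n ^ 2) * x ^ 2) := by
  refine ((summable_pnat_sq_pow_mul_exp_neg_mul_sq 0 (c := π * x ^ 2) (by positivity)).sub
    ((summable_pnat_sq_pow_mul_exp_neg_mul_sq 1 (c := π * x ^ 2) (by positivity)).mul_left
      (2 * π * x ^ 2))).congr fun n => ?_
  ring_nf

lemma psi_eq_tsum_inv (x : ℝ) :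
    psi x = ∑' n : ℕ+, 4 * π * n ^ 2 * (x⁻¹ ^ 3 * exp (-(π * n ^ 2) * x⁻¹ ^ 2)) := by
  rw [psi, ← tsum_mul_left]
  refine tsum_congr fun n => ?_
  rw [zpow_neg, zpow_ofNat, inv_pow, inv_pow, div_eq_mul_inv]
  ring_nf

lemma summable_psi_inv_term {u : ℝ} (hu : u ≠ 0) :
    Summable fun n : ℕ+ => 4 * π * n ^ 2 * (u ^ 3 * exp (-(π * n ^ 2) * u ^ 2)) := by
  refine ((summable_pnat_sq_pow_mul_exp_neg_mul_sq 1 (c := π * u ^ 2) (by positivity)).mul_left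
    (4 * π * u ^ 3)).congr fun n => ?_
  ring_nf

lemma monotoneOn_psi_Ioc : MonotoneOn psi (Ioc 0 1) := by
  intro x hx y hy hxy
  rw [psi_eq_tsum_inv, psi_eq_tsum_inv]
  refine Summable.tsum_le_tsum (fun n => ?_) (summable_psi_inv_term (inv_ne_zero hx.1.ne'))
    (summable_psi_inv_term (inv_ne_zero hy.1.ne'))
  have hterm := antitoneOn_pow_three_mul_exp_neg_mul_sq zero_le_one (three_le_two_mul_pi_mul_sq n)
  exact mul_le_mul_of_nonneg_left (hterm (one_le_inv₀ hy.1 |>.2 hy.2) (one_le_inv₀ hx.1 |>.2 hx.2)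
    (inv_anti₀ hx.1 hxy)) (by positivity)

lemma monotoneOn_psi_Ici : MonotoneOn psi (Ici 1) := by
  intro x hx y hy hxy
  have hx0 : 0 < x := zero_lt_one.trans_le hx
  have hy0 : 0 < y := zero_lt_one.trans_le hy
  rw [psi_eq_one_add_two_mul_tsum hx0, psi_eq_one_add_two_mul_tsum hy0]
  gcongr 1 + 2 * ?_
  exact Summable.tsum_le_tsum (fun n => monotoneOn_one_sub_two_mul_sq_mul_exp_neg_mul_sq
    zero_le_one (three_le_two_mul_pi_mul_sq n) hx hy hxy) (summable_psi_term hx0.ne')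
    (summable_psi_term hy0.ne')

lemma monotoneOn_psi : MonotoneOn psi (Ioi 0) := by
  rw [← Ioc_union_Ici_eq_Ioi zero_lt_one]
  exact monotoneOn_psi_Ioc.union_right monotoneOn_psi_Ici (isGreatest_Ioc zero_lt_one) isLeast_Ici

lemma tendsto_psi_nhdsGT_zero : Tendsto psi (𝓝[>] 0) (𝓝 0) := by
  have hlim : Tendsto (fun u => ∑' n : ℕ+, 4 * π * n ^ 2 * (u ^ 3 * exp (-(π * n ^ 2) * u ^ 2)))
      atTop (𝓝 0) := by
    have := tendsto_tsum_of_dominated_convergence (summable_psi_inv_term one_ne_zero)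
      (fun n => (tendsto_pow_three_mul_exp_neg_mul_sq_atTop (c := π * n ^ 2)
        (by positivity)).const_mul (4 * π * n ^ 2)) ?_
    · simpa using this
    filter_upwards [eventually_ge_atTop 1] with u hu n
    rw [norm_of_nonneg (by positivity)]
    exact mul_le_mul_of_nonneg_left (antitoneOn_pow_three_mul_exp_neg_mul_sq zero_le_one
      (three_le_two_mul_pi_mul_sq n) self_mem_Ici hu hu) (by positivity)
  rw [funext psi_eq_tsum_inv]
  exact hlim.comp tendsto_inv_nhdsGT_zero

lemma tendsto_psi_atTop : Tendsto psi atTop (𝓝 1) := by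
  have hlim : Tendsto
      (fun x => ∑' n : ℕ+, (1 - 2 * (π * n ^ 2) * x ^ 2) * exp (-(π * n ^ 2) * x ^ 2))
      atTop (𝓝 0) := by
    have := tendsto_tsum_of_dominated_convergence (summable_psi_term one_ne_zero).neg
      (fun n => tendsto_one_sub_two_mul_sq_mul_exp_neg_mul_sq_atTop (c := π * n ^ 2)
        (by positivity)) ?_
    · simpa using this
    filter_upwards [eventually_ge_atTop 1] with x hx n
    have hx2 : 1 ≤ x ^ 2 := one_le_pow₀ hx
    have hneg : (1 - 2 * (π * n ^ 2) * x ^ 2) * exp (-(π * n ^ 2) * x ^ 2) ≤ 0 :=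
      mul_nonpos_of_nonpos_of_nonneg (by nlinarith [three_le_two_mul_pi_mul_sq n])
        (exp_pos _).le
    rw [norm_of_nonpos hneg, neg_le_neg_iff]
    exact monotoneOn_one_sub_two_mul_sq_mul_exp_neg_mul_sq zero_le_one
      (three_le_two_mul_pi_mul_sq n) self_mem_Ici hx hx
  have h1 := (hlim.const_mul 2).const_add 1
  rw [mul_zero, add_zero] at h1
  exact h1.congr' <| (eventually_gt_atTop 0).mono fun x hx => (psi_eq_one_add_two_mul_tsum hx).symm

theorem psi_cdf_properties :
    MonotoneOn psi (Set.Ioi (0 : ℝ)) ∧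
    Tendsto psi (nhdsWithin 0 (Set.Ioi (0 : ℝ))) (nhds 0) ∧
    Tendsto psi atTop (nhds 1) :=
  ⟨monotoneOn_psi, tendsto_psi_nhdsGT_zero, tendsto_psi_atTop⟩
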